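/- Let u be a solution of the elliptic Euler–Darboux equation on an open set U ⊆ ℝ² with x + y ≠ 0 on U. Then the function v(x,y) = (−xy·u_x − y²·u_y + x²·u_y − xy·u_y − 2x²y·u_xy − 2xy²·u_xy + x³·u_yy + x²y·u_yy − xy²·u_yy − y³·u_yy)/(x+y) is also a solution of the elliptic Euler–Darboux equation on U. -/

import Mathlib

/-- Partial derivative of a real-valued function on `ℝ²` in the direction `v`. -/
noncomputable def pdv (v : ℝ × ℝ) (f : ℝ × ℝ → ℝ) : ℝ × ℝ → ℝ := fun p => fderiv ℝ f p v

/-- Partial derivative with respect to the first coordinate (`x`). -/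
noncomputable def px : (ℝ × ℝ → ℝ) → ℝ × ℝ → ℝ := pdv (1, 0)

/-- Partial derivative with respect to the second coordinate (`y`). -/
noncomputable def py : (ℝ × ℝ → ℝ) → ℝ × ℝ → ℝ := pdv (0, 1)

/-- `u` is a solution of the elliptic Euler–Darboux equation
`(x+y)(u_xx + u_yy) + u_x + u_y = 0` on `U`. -/
def IsEDSolution (U : Set (ℝ × ℝ)) (u : ℝ × ℝ → ℝ) : Prop :=
  ContDiffOn ℝ (⊤ : ℕ∞) u U ∧
    ∀ p ∈ U, (p.1 + p.2) * (px (px u) p + py (py u) p) + px u p + py u p = 0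

open Filter Topology

section Tools
variable {f g : ℝ × ℝ → ℝ} {q : ℝ × ℝ} {c : ℝ} {U : Set (ℝ × ℝ)}

lemma pdv_congr {w : ℝ × ℝ} (h : f =ᶠ[nhds q] g) : pdv w f q = pdv w g q := by
  simp [pdv, h.fderiv_eq]

lemma px_congrOn (hU : IsOpen U) (hq : q ∈ U) (h : ∀ r ∈ U, f r = g r) :
    px f q = px g q :=
  pdv_congr (Filter.eventuallyEq_of_mem (hU.mem_nhds hq) fun r hr => h r hr)

lemma py_congrOn (hU : IsOpen U) (hq : q ∈ U) (h : ∀ r ∈ U, f r = g r) :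
    py f q = py g q :=
  pdv_congr (Filter.eventuallyEq_of_mem (hU.mem_nhds hq) fun r hr => h r hr)

lemma contDiffAt_pdv {w : ℝ × ℝ} (hf : ContDiffAt ℝ (⊤ : ℕ∞) f q) : ContDiffAt ℝ (⊤ : ℕ∞) (pdv w f) q :=
  (hf.fderiv_right (by simp)).clm_apply contDiffAt_const

lemma px_add (hf : DifferentiableAt ℝ f q) (hg : DifferentiableAt ℝ g q) :
    px (fun p => f p + g p) q = px f q + px g q := by
  simp [px, pdv, fderiv_fun_add hf hg]

lemma px_sub (hf : DifferentiableAt ℝ f q) (hg : DifferentiableAt ℝ g q) :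
    px (fun p => f p - g p) q = px f q - px g q := by
  simp [px, pdv, fderiv_fun_sub hf hg]

lemma px_neg : px (fun p => -(f p)) q = -(px f q) := by
  simp [px, pdv, fderiv_neg]

lemma px_mul (hf : DifferentiableAt ℝ f q) (hg : DifferentiableAt ℝ g q) :
    px (fun p => f p * g p) q = px f q * g q + f q * px g q := by
  simp [px, pdv, fderiv_fun_mul hf hg]; ring

lemma px_const : px (fun _ => c) q = 0 := by simp [px, pdv]

lemma px_fst : px (fun p : ℝ × ℝ => p.1) q = 1 := by
  rw [px, pdv, show (fun p : ℝ × ℝ => p.1) = Prod.fst from rfl]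
  simp [fderiv_fst]

lemma px_snd : px (fun p : ℝ × ℝ => p.2) q = 0 := by
  rw [px, pdv, show (fun p : ℝ × ℝ => p.2) = Prod.snd from rfl]
  simp [fderiv_snd]

lemma py_add (hf : DifferentiableAt ℝ f q) (hg : DifferentiableAt ℝ g q) :
    py (fun p => f p + g p) q = py f q + py g q := by
  simp [py, pdv, fderiv_fun_add hf hg]

lemma py_sub (hf : DifferentiableAt ℝ f q) (hg : DifferentiableAt ℝ g q) :
    py (fun p => f p - g p) q = py f q - py g q := by
  simp [py, pdv, fderiv_fun_sub hf hg]

lemma py_neg : py (fun p => -(f p)) q = -(py f q) := by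
  simp [py, pdv, fderiv_neg]

lemma py_mul (hf : DifferentiableAt ℝ f q) (hg : DifferentiableAt ℝ g q) :
    py (fun p => f p * g p) q = py f q * g q + f q * py g q := by
  simp [py, pdv, fderiv_fun_mul hf hg]; ring

lemma py_const : py (fun _ => c) q = 0 := by simp [py, pdv]

lemma py_fst : py (fun p : ℝ × ℝ => p.1) q = 0 := by
  rw [py, pdv, show (fun p : ℝ × ℝ => p.1) = Prod.fst from rfl]
  simp [fderiv_fst]

lemma py_snd : py (fun p : ℝ × ℝ => p.2) q = 1 := by
  rw [py, pdv, show (fun p : ℝ × ℝ => p.2) = Prod.snd from rfl]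
  simp [fderiv_snd]

lemma px_py_symm (hf : ContDiffAt ℝ (⊤ : ℕ∞) f q) : px (py f) q = py (px f) q := by
  have hd : DifferentiableAt ℝ (fderiv ℝ f) q := (hf.fderiv_right (m := 1) (WithTop.coe_le_coe.mpr le_top)).differentiableAt (by simp)
  have hs := hf.isSymmSndFDerivAt (by rw [minSmoothness_of_isRCLikeNormedField]; exact WithTop.coe_le_coe.mpr le_top)
  have h1 : ∀ w : ℝ × ℝ, fderiv ℝ (fun r => fderiv ℝ f r w) q =
      (ContinuousLinearMap.apply ℝ ℝ w).comp (fderiv ℝ (fderiv ℝ f) q) := fun w =>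
    ((ContinuousLinearMap.apply ℝ ℝ w).hasFDerivAt.comp q hd.hasFDerivAt).fderiv
  have e1 : px (py f) q = fderiv ℝ (fun r => fderiv ℝ f r (0, 1)) q (1, 0) := rfl
  have e2 : py (px f) q = fderiv ℝ (fun r => fderiv ℝ f r (1, 0)) q (0, 1) := rfl
  rw [e1, e2, h1, h1]
  simpa using hs (1, 0) (0, 1)

end Tools

set_option maxHeartbeats 2000000 in
theorem ED_aux (U : Set (ℝ × ℝ)) (hU : IsOpen U)
    (hne : ∀ p ∈ U, p.1 + p.2 ≠ 0) (u : ℝ × ℝ → ℝ) (hu : IsEDSolution U u)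
    (w : ℝ × ℝ → ℝ) (hvC : ContDiffOn ℝ (⊤ : ℕ∞) w U)
    (hv : ∀ r ∈ U, w r * (r.1 + r.2) = (-1)*r.2*r.2*((py (u)) r) + (-1)*r.1*r.2*((py (u)) r) + (1)*r.1*r.1*((py (u)) r) + (-1)*r.2*r.2*r.2*((py (py (u))) r) + (-1)*r.1*r.2*r.2*((py (py (u))) r) + (1)*r.1*r.1*r.2*((py (py (u))) r) + (1)*r.1*r.1*r.1*((py (py (u))) r) + (-1)*r.1*r.2*((px (u)) r) + (-2)*r.1*r.2*r.2*((py (px (u))) r) + (-2)*r.1*r.1*r.2*((py (px (u))) r)) :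
    IsEDSolution U w := by
  obtain ⟨huC, huE⟩ := hu
  have hc00 : ∀ r ∈ U, ContDiffAt ℝ (⊤ : ℕ∞) u r := fun r hr => huC.contDiffAt (hU.mem_nhds hr)
  have hc01 : ∀ r ∈ U, ContDiffAt ℝ (⊤ : ℕ∞) (py (u)) r := fun r hr => contDiffAt_pdv (hc00 r hr)
  have hc10 : ∀ r ∈ U, ContDiffAt ℝ (⊤ : ℕ∞) (px (u)) r := fun r hr => contDiffAt_pdv (hc00 r hr)
  have hc02 : ∀ r ∈ U, ContDiffAt ℝ (⊤ : ℕ∞) (py (py (u))) r := fun r hr => contDiffAt_pdv (hc01 r hr)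
  have hc11 : ∀ r ∈ U, ContDiffAt ℝ (⊤ : ℕ∞) (py (px (u))) r := fun r hr => contDiffAt_pdv (hc10 r hr)
  have hc20 : ∀ r ∈ U, ContDiffAt ℝ (⊤ : ℕ∞) (px (px (u))) r := fun r hr => contDiffAt_pdv (hc10 r hr)
  have hc03 : ∀ r ∈ U, ContDiffAt ℝ (⊤ : ℕ∞) (py (py (py (u)))) r := fun r hr => contDiffAt_pdv (hc02 r hr)
  have hc12 : ∀ r ∈ U, ContDiffAt ℝ (⊤ : ℕ∞) (py (py (px (u)))) r := fun r hr => contDiffAt_pdv (hc11 r hr)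
  have hc21 : ∀ r ∈ U, ContDiffAt ℝ (⊤ : ℕ∞) (py (px (px (u)))) r := fun r hr => contDiffAt_pdv (hc20 r hr)
  have hc30 : ∀ r ∈ U, ContDiffAt ℝ (⊤ : ℕ∞) (px (px (px (u)))) r := fun r hr => contDiffAt_pdv (hc20 r hr)
  have hd01 : ∀ r ∈ U, DifferentiableAt ℝ (py (u)) r := fun r hr => (hc01 r hr).differentiableAt (by simp)
  have hd10 : ∀ r ∈ U, DifferentiableAt ℝ (px (u)) r := fun r hr => (hc10 r hr).differentiableAt (by simp)
  have hd02 : ∀ r ∈ U, DifferentiableAt ℝ (py (py (u))) r := fun r hr => (hc02 r hr).differentiableAt (by simp)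
  have hd11 : ∀ r ∈ U, DifferentiableAt ℝ (py (px (u))) r := fun r hr => (hc11 r hr).differentiableAt (by simp)
  have hd20 : ∀ r ∈ U, DifferentiableAt ℝ (px (px (u))) r := fun r hr => (hc20 r hr).differentiableAt (by simp)
  have hd03 : ∀ r ∈ U, DifferentiableAt ℝ (py (py (py (u)))) r := fun r hr => (hc03 r hr).differentiableAt (by simp)
  have hd12 : ∀ r ∈ U, DifferentiableAt ℝ (py (py (px (u)))) r := fun r hr => (hc12 r hr).differentiableAt (by simp)
  have hd21 : ∀ r ∈ U, DifferentiableAt ℝ (py (px (px (u)))) r := fun r hr => (hc21 r hr).differentiableAt (by simp)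
  have hd30 : ∀ r ∈ U, DifferentiableAt ℝ (px (px (px (u)))) r := fun r hr => (hc30 r hr).differentiableAt (by simp)
  have c1 : ∀ r ∈ U, px (py (u)) r = py (px (u)) r := fun r hr => px_py_symm (hc00 r hr)
  have c2 : ∀ r ∈ U, px (py (px (u))) r = py (px (px (u))) r := fun r hr => px_py_symm (hc10 r hr)
  have c3 : ∀ r ∈ U, px (py (py (u))) r = py (py (px (u))) r := fun r hr =>
    (px_py_symm (hc01 r hr)).trans (py_congrOn hU hr c1)
  have c4 : ∀ r ∈ U, px (py (px (px (u)))) r = py (px (px (px (u)))) r := fun r hr =>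
    px_py_symm (hc20 r hr)
  have c5 : ∀ r ∈ U, px (py (py (px (u)))) r = py (py (px (px (u)))) r := fun r hr =>
    (px_py_symm (hc11 r hr)).trans (py_congrOn hU hr c2)
  refine ⟨hvC, ?_⟩
  have hdw : ∀ r ∈ U, DifferentiableAt ℝ w r :=
    fun r hr => ((hvC.contDiffAt (hU.mem_nhds hr)).differentiableAt (by simp))
  have hdwx : ∀ r ∈ U, DifferentiableAt ℝ (px w) r := fun r hr =>
    ((contDiffAt_pdv (hvC.contDiffAt (hU.mem_nhds hr))).differentiableAt (by simp))
  have hdwy : ∀ r ∈ U, DifferentiableAt ℝ (py w) r := fun r hr =>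
    ((contDiffAt_pdv (hvC.contDiffAt (hU.mem_nhds hr))).differentiableAt (by simp))
  have hE0 : ∀ r ∈ U, ((r.1 + r.2)) * ((px (px (u))) r + (py (py (u))) r) + (px (u)) r + (py (u)) r = 0 := fun r hr => huE r hr
  have hE1 : ∀ r ∈ U, (1)*((py (py (u))) r) + (1)*((py (px (u))) r) + (1)*r.2*((py (py (px (u)))) r) + (1)*r.1*((py (py (px (u)))) r) + (2)*((px (px (u))) r) + (1)*r.2*((px (px (px (u)))) r) + (1)*r.1*((px (px (px (u)))) r) = 0 := by
    intro r hr
    have h0 : px (fun t => ((t.1 + t.2)) * ((px (px (u))) t + (py (py (u))) t) + (px (u)) t + (py (u)) t) r = px (fun _ => (0:ℝ)) r :=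
      px_congrOn hU hr hE0
    have d01 := hd01 r hr
    have d10 := hd10 r hr
    have d02 := hd02 r hr
    have d11 := hd11 r hr
    have d20 := hd20 r hr
    have d03 := hd03 r hr
    have d12 := hd12 r hr
    have d21 := hd21 r hr
    have d30 := hd30 r hr
    simp (disch := fun_prop) only [px_add, px_sub, px_neg, px_mul, px_fst, px_snd, px_const] at h0
    try simp only [c1 r hr, c2 r hr, c3 r hr, c4 r hr, c5 r hr] at h0
    linear_combination h0
  have hE2 : ∀ r ∈ U, (2)*((py (py (u))) r) + (1)*r.2*((py (py (py (u)))) r) + (1)*r.1*((py (py (py (u)))) r) + (1)*((py (px (u))) r) + (1)*((px (px (u))) r) + (1)*r.2*((py (px (px (u)))) r) + (1)*r.1*((py (px (px (u)))) r) = 0 := by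
    intro r hr
    have h0 : py (fun t => ((t.1 + t.2)) * ((px (px (u))) t + (py (py (u))) t) + (px (u)) t + (py (u)) t) r = py (fun _ => (0:ℝ)) r :=
      py_congrOn hU hr hE0
    have d01 := hd01 r hr
    have d10 := hd10 r hr
    have d02 := hd02 r hr
    have d11 := hd11 r hr
    have d20 := hd20 r hr
    have d03 := hd03 r hr
    have d12 := hd12 r hr
    have d21 := hd21 r hr
    have d30 := hd30 r hr
    simp (disch := fun_prop) only [py_add, py_sub, py_neg, py_mul, py_fst, py_snd, py_const] at h0
    try simp only [c1 r hr, c2 r hr, c3 r hr, c4 r hr, c5 r hr] at h0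
    linear_combination h0
  have hE3 : ∀ r ∈ U, (1)*((py (py (py (u)))) r) + (2)*((py (py (px (u)))) r) + (1)*r.2*((py (py (py (px (u))))) r) + (1)*r.1*((py (py (py (px (u))))) r) + (2)*((py (px (px (u)))) r) + (1)*((px (px (px (u)))) r) + (1)*r.2*((py (px (px (px (u))))) r) + (1)*r.1*((py (px (px (px (u))))) r) = 0 := by
    intro r hr
    have h0 : py (fun t => (1)*((py (py (u))) t) + (1)*((py (px (u))) t) + (1)*t.2*((py (py (px (u)))) t) + (1)*t.1*((py (py (px (u)))) t) + (2)*((px (px (u))) t) + (1)*t.2*((px (px (px (u)))) t) + (1)*t.1*((px (px (px (u)))) t)) r = py (fun _ => (0:ℝ)) r :=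
      py_congrOn hU hr hE1
    have d01 := hd01 r hr
    have d10 := hd10 r hr
    have d02 := hd02 r hr
    have d11 := hd11 r hr
    have d20 := hd20 r hr
    have d03 := hd03 r hr
    have d12 := hd12 r hr
    have d21 := hd21 r hr
    have d30 := hd30 r hr
    simp (disch := fun_prop) only [py_add, py_sub, py_neg, py_mul, py_fst, py_snd, py_const] at h0
    try simp only [c1 r hr, c2 r hr, c3 r hr, c4 r hr, c5 r hr] at h0
    linear_combination h0
  have hE4 : ∀ r ∈ U, (3)*((py (py (py (u)))) r) + (1)*r.2*((py (py (py (py (u))))) r) + (1)*r.1*((py (py (py (py (u))))) r) + (1)*((py (py (px (u)))) r) + (2)*((py (px (px (u)))) r) + (1)*r.2*((py (py (px (px (u))))) r) + (1)*r.1*((py (py (px (px (u))))) r) = 0 := by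
    intro r hr
    have h0 : py (fun t => (2)*((py (py (u))) t) + (1)*t.2*((py (py (py (u)))) t) + (1)*t.1*((py (py (py (u)))) t) + (1)*((py (px (u))) t) + (1)*((px (px (u))) t) + (1)*t.2*((py (px (px (u)))) t) + (1)*t.1*((py (px (px (u)))) t)) r = py (fun _ => (0:ℝ)) r :=
      py_congrOn hU hr hE2
    have d01 := hd01 r hr
    have d10 := hd10 r hr
    have d02 := hd02 r hr
    have d11 := hd11 r hr
    have d20 := hd20 r hr
    have d03 := hd03 r hr
    have d12 := hd12 r hr
    have d21 := hd21 r hr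
    have d30 := hd30 r hr
    simp (disch := fun_prop) only [py_add, py_sub, py_neg, py_mul, py_fst, py_snd, py_const] at h0
    try simp only [c1 r hr, c2 r hr, c3 r hr, c4 r hr, c5 r hr] at h0
    linear_combination h0
  have hP1 : ∀ r ∈ U, px w r * (r.1 + r.2) + w r = (-1)*r.2*((py (u)) r) + (2)*r.1*((py (u)) r) + (-1)*r.2*r.2*((py (py (u))) r) + (2)*r.1*r.2*((py (py (u))) r) + (3)*r.1*r.1*((py (py (u))) r) + (-1)*r.2*((px (u)) r) + (-3)*r.2*r.2*((py (px (u))) r) + (-5)*r.1*r.2*((py (px (u))) r) + (1)*r.1*r.1*((py (px (u))) r) + (-1)*r.2*r.2*r.2*((py (py (px (u)))) r) + (-1)*r.1*r.2*r.2*((py (py (px (u)))) r) + (1)*r.1*r.1*r.2*((py (py (px (u)))) r) + (1)*r.1*r.1*r.1*((py (py (px (u)))) r) + (-1)*r.1*r.2*((px (px (u))) r) + (-2)*r.1*r.2*r.2*((py (px (px (u)))) r) + (-2)*r.1*r.1*r.2*((py (px (px (u)))) r) := by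
    intro r hr
    have h0 : px (fun t => w t * (t.1 + t.2)) r = px (fun t => (-1)*t.2*t.2*((py (u)) t) + (-1)*t.1*t.2*((py (u)) t) + (1)*t.1*t.1*((py (u)) t) + (-1)*t.2*t.2*t.2*((py (py (u))) t) + (-1)*t.1*t.2*t.2*((py (py (u))) t) + (1)*t.1*t.1*t.2*((py (py (u))) t) + (1)*t.1*t.1*t.1*((py (py (u))) t) + (-1)*t.1*t.2*((px (u)) t) + (-2)*t.1*t.2*t.2*((py (px (u))) t) + (-2)*t.1*t.1*t.2*((py (px (u))) t)) r :=
      px_congrOn hU hr hv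
    have d01 := hd01 r hr
    have d10 := hd10 r hr
    have d02 := hd02 r hr
    have d11 := hd11 r hr
    have d20 := hd20 r hr
    have d03 := hd03 r hr
    have d12 := hd12 r hr
    have d21 := hd21 r hr
    have d30 := hd30 r hr
    have dw := hdw r hr
    have dwx := hdwx r hr
    have dwy := hdwy r hr
    simp (disch := fun_prop) only [px_add, px_sub, px_neg, px_mul, px_fst, px_snd, px_const] at h0
    try simp only [c1 r hr, c2 r hr, c3 r hr, c4 r hr, c5 r hr] at h0
    linear_combination h0
  have hQ1 : ∀ r ∈ U, py w r * (r.1 + r.2) + w r = (-2)*r.2*((py (u)) r) + (-1)*r.1*((py (u)) r) + (-4)*r.2*r.2*((py (py (u))) r) + (-3)*r.1*r.2*((py (py (u))) r) + (2)*r.1*r.1*((py (py (u))) r) + (-1)*r.2*r.2*r.2*((py (py (py (u)))) r) + (-1)*r.1*r.2*r.2*((py (py (py (u)))) r) + (1)*r.1*r.1*r.2*((py (py (py (u)))) r) + (1)*r.1*r.1*r.1*((py (py (py (u)))) r) + (-1)*r.1*((px (u)) r) + (-5)*r.1*r.2*((py (px (u))) r) + (-2)*r.1*r.1*((py (px (u)))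 r) + (-2)*r.1*r.2*r.2*((py (py (px (u)))) r) + (-2)*r.1*r.1*r.2*((py (py (px (u)))) r) := by
    intro r hr
    have h0 : py (fun t => w t * (t.1 + t.2)) r = py (fun t => (-1)*t.2*t.2*((py (u)) t) + (-1)*t.1*t.2*((py (u)) t) + (1)*t.1*t.1*((py (u)) t) + (-1)*t.2*t.2*t.2*((py (py (u))) t) + (-1)*t.1*t.2*t.2*((py (py (u))) t) + (1)*t.1*t.1*t.2*((py (py (u))) t) + (1)*t.1*t.1*t.1*((py (py (u))) t) + (-1)*t.1*t.2*((px (u)) t) + (-2)*t.1*t.2*t.2*((py (px (u))) t) + (-2)*t.1*t.1*t.2*((py (px (u))) t)) r :=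
      py_congrOn hU hr hv
    have d01 := hd01 r hr
    have d10 := hd10 r hr
    have d02 := hd02 r hr
    have d11 := hd11 r hr
    have d20 := hd20 r hr
    have d03 := hd03 r hr
    have d12 := hd12 r hr
    have d21 := hd21 r hr
    have d30 := hd30 r hr
    have dw := hdw r hr
    have dwx := hdwx r hr
    have dwy := hdwy r hr
    simp (disch := fun_prop) only [py_add, py_sub, py_neg, py_mul, py_fst, py_snd, py_const] at h0
    try simp only [c1 r hr, c2 r hr, c3 r hr, c4 r hr, c5 r hr] at h0
    linear_combination h0
  have hP2 : ∀ r ∈ U, px (px w) r * (r.1 + r.2) + 2 * px w r = (2)*((py (u)) r) + (2)*r.2*((py (py (u))) r) + (6)*r.1*((py (py (u))) r) + (-6)*r.2*((py (px (u))) r) + (4)*r.1*((py (px (u))) r) + (-2)*r.2*r.2*((py (py (px (u)))) r) + (4)*r.1*r.2*((py (py (px (u)))) r) + (6)*r.1*r.1*((py (py (px (u)))) r) + (-2)*r.2*((px (px (u))) r) + (-5)*r.2*r.2*((py (px (px (u)))) r) + (-9)*r.1*r.2*((py (px (px (u)))) r) + (1)*r.1*r.1*((py (px (px (u)))) r) +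 (-1)*r.2*r.2*r.2*((py (py (px (px (u))))) r) + (-1)*r.1*r.2*r.2*((py (py (px (px (u))))) r) + (1)*r.1*r.1*r.2*((py (py (px (px (u))))) r) + (1)*r.1*r.1*r.1*((py (py (px (px (u))))) r) + (-1)*r.1*r.2*((px (px (px (u)))) r) + (-2)*r.1*r.2*r.2*((py (px (px (px (u))))) r) + (-2)*r.1*r.1*r.2*((py (px (px (px (u))))) r) := by
    intro r hr
    have h0 : px (fun t => px w t * (t.1 + t.2) + w t) r = px (fun t => (-1)*t.2*((py (u)) t) + (2)*t.1*((py (u)) t) + (-1)*t.2*t.2*((py (py (u))) t) + (2)*t.1*t.2*((py (py (u))) t) + (3)*t.1*t.1*((py (py (u))) t) + (-1)*t.2*((px (u)) t) + (-3)*t.2*t.2*((py (px (u))) t) + (-5)*t.1*t.2*((py (px (u))) t) + (1)*t.1*t.1*((py (px (u))) t) + (-1)*t.2*t.2*t.2*((py (py (px (u)))) t) + (-1)*t.1*t.2*t.2*((py (py (px (u)))) t) + (1)*t.1*t.1*t.2*((py (py (px (u)))) t) + (1)*t.1*t.1*t.1*((py (py (px (u)))) t) + (-1)*t.1*t.2*((px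 (px (u))) t) + (-2)*t.1*t.2*t.2*((py (px (px (u)))) t) + (-2)*t.1*t.1*t.2*((py (px (px (u)))) t)) r :=
      px_congrOn hU hr hP1
    have d01 := hd01 r hr
    have d10 := hd10 r hr
    have d02 := hd02 r hr
    have d11 := hd11 r hr
    have d20 := hd20 r hr
    have d03 := hd03 r hr
    have d12 := hd12 r hr
    have d21 := hd21 r hr
    have d30 := hd30 r hr
    have dw := hdw r hr
    have dwx := hdwx r hr
    have dwy := hdwy r hr
    simp (disch := fun_prop) only [px_add, px_sub, px_neg, px_mul, px_fst, px_snd, px_const] at h0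
    try simp only [c1 r hr, c2 r hr, c3 r hr, c4 r hr, c5 r hr] at h0
    linear_combination h0
  have hQ2 : ∀ r ∈ U, py (py w) r * (r.1 + r.2) + 2 * py w r = (-2)*((py (u)) r) + (-10)*r.2*((py (py (u))) r) + (-4)*r.1*((py (py (u))) r) + (-7)*r.2*r.2*((py (py (py (u)))) r) + (-5)*r.1*r.2*((py (py (py (u)))) r) + (3)*r.1*r.1*((py (py (py (u)))) r) + (-1)*r.2*r.2*r.2*((py (py (py (py (u))))) r) + (-1)*r.1*r.2*r.2*((py (py (py (py (u))))) r) + (1)*r.1*r.1*r.2*((py (py (py (py (u))))) r) + (1)*r.1*r.1*r.1*((py (py (py (py (u))))) r) + (-6)*r.1*((py (px (u))) r) + (-9)*r.1*r.2*((py (py (px (u)))) r) + (-4)*r.1*r.1*((py (py (px (u)))) r) + (-2)*r.1*r.2*r.2*((py (py (py (px (u))))) r) + (-2)*r.1*r.1*r.2*((py (py (py (px (u))))) r) := by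
    intro r hr
    have h0 : py (fun t => py w t * (t.1 + t.2) + w t) r = py (fun t => (-2)*t.2*((py (u)) t) + (-1)*t.1*((py (u)) t) + (-4)*t.2*t.2*((py (py (u))) t) + (-3)*t.1*t.2*((py (py (u))) t) + (2)*t.1*t.1*((py (py (u))) t) + (-1)*t.2*t.2*t.2*((py (py (py (u)))) t) + (-1)*t.1*t.2*t.2*((py (py (py (u)))) t) + (1)*t.1*t.1*t.2*((py (py (py (u)))) t) + (1)*t.1*t.1*t.1*((py (py (py (u)))) t) + (-1)*t.1*((px (u)) t) + (-5)*t.1*t.2*((py (px (u))) t) + (-2)*t.1*t.1*((py (px (u))) t) + (-2)*t.1*t.2*t.2*((py (py (px (u)))) t) + (-2)*t.1*t.1*t.2*((py (py (px (u)))) t)) r :=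
      py_congrOn hU hr hQ1
    have d01 := hd01 r hr
    have d10 := hd10 r hr
    have d02 := hd02 r hr
    have d11 := hd11 r hr
    have d20 := hd20 r hr
    have d03 := hd03 r hr
    have d12 := hd12 r hr
    have d21 := hd21 r hr
    have d30 := hd30 r hr
    have dw := hdw r hr
    have dwx := hdwx r hr
    have dwy := hdwy r hr
    simp (disch := fun_prop) only [py_add, py_sub, py_neg, py_mul, py_fst, py_snd, py_const] at h0
    try simp only [c1 r hr, c2 r hr, c3 r hr, c4 r hr, c5 r hr] at h0
    linear_combination h0
  intro p hp
  have hs := hne p hp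
  have key : (p.1 + p.2)^2 * ((p.1 + p.2) * (px (px w) p + py (py w) p) + px w p + py w p) = 0 := by
    linear_combination ((p.1+p.2)^2) * (hP2 p hp) + ((p.1+p.2)^2) * (hQ2 p hp)
      - (p.1+p.2) * (hP1 p hp) - (p.1+p.2) * (hQ1 p hp) + 2 * (hv p hp)
      + (p.1^2 + p.2^2) * (hE0 p hp)
      + (p.1^2*p.2 + p.1*p.2^2) * (hE1 p hp)
      + (-(p.1^3) - 4*p.1^2*p.2 - 6*p.1*p.2^2 - 3*p.2^3) * (hE2 p hp)
      + (-(2:ℝ)*p.1^3*p.2 - 4*p.1^2*p.2^2 - 2*p.1*p.2^3) * (hE3 p hp)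
      + (p.1^4 + 2*p.1^3*p.2 - 2*p.1*p.2^3 - p.2^4) * (hE4 p hp)
  exact (mul_eq_zero.mp key).resolve_left (pow_ne_zero 2 hs)

set_option maxHeartbeats 1000000 in
/-- The symmetry `X₃`: if `u` solves the elliptic Euler–Darboux equation, so does
`v = (−xy·u_x − y²·u_y + x²·u_y − xy·u_y − 2x²y·u_xy − 2xy²·u_xy
      + x³·u_yy + x²y·u_yy − xy²·u_yy − y³·u_yy)/(x+y)`. -/
theorem ED_symmetry_X3 (U : Set (ℝ × ℝ)) (hU : IsOpen U)
    (hne : ∀ p ∈ U, p.1 + p.2 ≠ 0) (u : ℝ × ℝ → ℝ) (hu : IsEDSolution U u) :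
    IsEDSolution U (fun p =>
      (-(p.1 * p.2) * px u p - p.2 ^ 2 * py u p + p.1 ^ 2 * py u p
        - p.1 * p.2 * py u p - 2 * p.1 ^ 2 * p.2 * py (px u) p
        - 2 * p.1 * p.2 ^ 2 * py (px u) p + p.1 ^ 3 * py (py u) p
        + p.1 ^ 2 * p.2 * py (py u) p - p.1 * p.2 ^ 2 * py (py u) p
        - p.2 ^ 3 * py (py u) p) / (p.1 + p.2)) := by
  have hc00 : ∀ r ∈ U, ContDiffAt ℝ (⊤ : ℕ∞) u r := fun r hr => hu.1.contDiffAt (hU.mem_nhds hr)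
  have hc10 : ∀ r ∈ U, ContDiffAt ℝ (⊤ : ℕ∞) (px u) r := fun r hr => contDiffAt_pdv (hc00 r hr)
  have hc01 : ∀ r ∈ U, ContDiffAt ℝ (⊤ : ℕ∞) (py u) r := fun r hr => contDiffAt_pdv (hc00 r hr)
  have hc11 : ∀ r ∈ U, ContDiffAt ℝ (⊤ : ℕ∞) (py (px u)) r := fun r hr => contDiffAt_pdv (hc10 r hr)
  have hc02 : ∀ r ∈ U, ContDiffAt ℝ (⊤ : ℕ∞) (py (py u)) r := fun r hr => contDiffAt_pdv (hc01 r hr)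
  have hvC : ContDiffOn ℝ (⊤ : ℕ∞) (fun p =>
      (-(p.1 * p.2) * px u p - p.2 ^ 2 * py u p + p.1 ^ 2 * py u p
        - p.1 * p.2 * py u p - 2 * p.1 ^ 2 * p.2 * py (px u) p
        - 2 * p.1 * p.2 ^ 2 * py (px u) p + p.1 ^ 3 * py (py u) p
        + p.1 ^ 2 * p.2 * py (py u) p - p.1 * p.2 ^ 2 * py (py u) p
        - p.2 ^ 3 * py (py u) p) / (p.1 + p.2)) U := by
    apply ContDiffOn.div _ (by fun_prop) hne
    have h10 : ContDiffOn ℝ (⊤ : ℕ∞) (px u) U := fun r hr => (hc10 r hr).contDiffWithinAt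
    have h01 : ContDiffOn ℝ (⊤ : ℕ∞) (py u) U := fun r hr => (hc01 r hr).contDiffWithinAt
    have h11 : ContDiffOn ℝ (⊤ : ℕ∞) (py (px u)) U := fun r hr => (hc11 r hr).contDiffWithinAt
    have h02 : ContDiffOn ℝ (⊤ : ℕ∞) (py (py u)) U := fun r hr => (hc02 r hr).contDiffWithinAt
    fun_prop
  refine ED_aux U hU hne u hu _ hvC ?_
  intro r hr
  have hs := hne r hr
  field_simp
  ring
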